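/- arXiv:1908.00107 — 4 statements merged into one kernel-verified Lean document; each statement's English description precedes it below -/
import Mathlib

section
/- Suppose F : ℝ^{Nn} → ℝ^{Nn} is µ-strongly monotone, 𝐅 : ℝ^{Nn} × ℝ^{Nn} → ℝ^{Nn} satisfies 𝐅(x, P_∥ x) = F(x) for all x and is l^u-Lipschitz in its second argument, and L is the Laplacian of a connected graph. Define Ã(x, u^⊥) = (𝐅(x, P_∥ x + u^⊥), c L_u u^⊥) on ℝ^{Nn} × C^⊥. Then for any (x, u^⊥) with u^⊥ ∈ C^⊥ and any (x̲, 0): ⟨(x − x̲, u^⊥), Ã(x, u^⊥) − Ã(x̲, 0)⟩ ≥ µ_Ã (‖x − x̲‖² + ‖u^⊥‖²), where µ_Ã = λ_min([[µ, −l^u/2],[−l^u/2, cλ_2(L)]]). In particular Ã is restricted strongly monotone (relative to points with zero orthogonal component) whenever cλ_2(L) > (l^u)²/(4µ). -/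
open RealInnerProductSpace

lemma stmt_5_quad_aux (mu lu c lam2 a b : ℝ) (hlu : 0 ≤ lu)
    (ha : 0 ≤ a) (hb : 0 ≤ b) :
    ((mu + c * lam2) - Real.sqrt ((mu - c * lam2) ^ 2 + lu ^ 2)) / 2 * (a ^ 2 + b ^ 2)
      ≤ mu * a ^ 2 - lu * a * b + c * lam2 * b ^ 2 := by
  set s : ℝ := Real.sqrt ((mu - c * lam2) ^ 2 + lu ^ 2) with hs_def
  have hs0 : 0 ≤ s := Real.sqrt_nonneg _
  have hs2 : s ^ 2 = (mu - c * lam2) ^ 2 + lu ^ 2 :=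
    Real.sq_sqrt (by positivity)
  set p : ℝ := (mu - c * lam2 + s) / 2 with hp_def
  set q : ℝ := (c * lam2 - mu + s) / 2 with hq_def
  have hp : 0 ≤ p := by
    nlinarith [hs2, hs0, sq_nonneg lu, sq_nonneg (s + (c * lam2 - mu))]
  have hq : 0 ≤ q := by
    nlinarith [hs2, hs0, sq_nonneg lu, sq_nonneg (s + (mu - c * lam2))]
  have hpq : p * q = lu ^ 2 / 4 := by
    rw [hp_def, hq_def]; nlinarith [hs2]
  have hroot : Real.sqrt p * Real.sqrt q = lu / 2 := by
    rw [← Real.sqrt_mul hp q, hpq]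
    have h : lu ^ 2 / 4 = (lu / 2) ^ 2 := by ring
    rw [h, Real.sqrt_sq (by linarith)]
  have hquad : lu * a * b ≤ p * a ^ 2 + q * b ^ 2 := by
    nlinarith [sq_nonneg (Real.sqrt p * a - Real.sqrt q * b),
      Real.sq_sqrt hp, Real.sq_sqrt hq, hroot, mul_nonneg ha hb]
  have hm : ((mu + c * lam2) - s) / 2 = mu - p := by rw [hp_def]; ring
  have hm2 : c * lam2 - mu + p = q := by rw [hp_def, hq_def]; ring
  rw [hm]
  nlinarith [hquad, hm2]

lemma stmt_5_pos_aux (mu lu c lam2 : ℝ) (hmu : 0 < mu) (hc : 0 < c)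
    (hlam2 : 0 < lam2) (hcl : c * lam2 > lu ^ 2 / (4 * mu)) :
    0 < ((mu + c * lam2) - Real.sqrt ((mu - c * lam2) ^ 2 + lu ^ 2)) / 2 := by
  have hs0 : 0 ≤ Real.sqrt ((mu - c * lam2) ^ 2 + lu ^ 2) := Real.sqrt_nonneg _
  have hs2 : (Real.sqrt ((mu - c * lam2) ^ 2 + lu ^ 2)) ^ 2
      = (mu - c * lam2) ^ 2 + lu ^ 2 := Real.sq_sqrt (by positivity)
  have h4mu : (0:ℝ) < 4 * mu := by linarith
  have h4 : lu ^ 2 < 4 * mu * (c * lam2) := by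
    have := (div_lt_iff₀ h4mu).mp hcl
    linarith
  have hsum : 0 < mu + c * lam2 := by nlinarith [mul_pos hc hlam2]
  have hkey : (Real.sqrt ((mu - c * lam2) ^ 2 + lu ^ 2)) ^ 2 < (mu + c * lam2) ^ 2 := by
    nlinarith
  nlinarith [hs0, hsum, hkey]

/-- Lemma 4 (restricted strong monotonicity of Ã): if `F` is `mu`-strongly
monotone, `𝐅(x, P_∥x) = F(x)`, `𝐅` is `lu`-Lipschitz in its second argument,
and `⟨v, L_u v⟩ ≥ λ₂‖v‖²` on `C^⊥ = ker P_∥`, then for every `(x, u^⊥)` with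
`u^⊥ ∈ C^⊥` and every `(x̲, 0)`,
`⟨(x−x̲, u^⊥), Ã(x,u^⊥) − Ã(x̲,0)⟩ ≥ µ_Ã (‖x−x̲‖² + ‖u^⊥‖²)`
with `µ_Ã = λ_min([[mu, −lu/2],[−lu/2, cλ₂]])`; in particular `µ_Ã > 0`
whenever `cλ₂ > lu²/(4 mu)`. -/
theorem stmt_5 {V : Type*} [NormedAddCommGroup V] [InnerProductSpace ℝ V]
    (F : V → V) (Fbig : V → V → V) (Ppar Lu : V →ₗ[ℝ] V)
    (mu lu c lam2 : ℝ) (hmu : 0 < mu) (hlu : 0 ≤ lu) (hc : 0 < c)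
    (hlam2 : 0 < lam2)
    (hmono : ∀ x y : V, mu * ‖x - y‖ ^ 2 ≤ ⟪x - y, F x - F y⟫)
    (hconsensus : ∀ x : V, Fbig x (Ppar x) = F x)
    (hLip : ∀ x u u' : V, ‖Fbig x u - Fbig x u'‖ ≤ lu * ‖u - u'‖)
    (hLap : ∀ v : V, Ppar v = 0 → lam2 * ‖v‖ ^ 2 ≤ ⟪v, Lu v⟫) :
    (∀ x xl uperp : V, Ppar uperp = 0 →
      ((mu + c * lam2) - Real.sqrt ((mu - c * lam2) ^ 2 + lu ^ 2)) / 2 *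
          (‖x - xl‖ ^ 2 + ‖uperp‖ ^ 2) ≤
        ⟪x - xl, Fbig x (Ppar x + uperp) - Fbig xl (Ppar xl)⟫ +
          ⟪uperp, c • Lu uperp⟫) ∧
    (c * lam2 > lu ^ 2 / (4 * mu) →
      0 < ((mu + c * lam2) - Real.sqrt ((mu - c * lam2) ^ 2 + lu ^ 2)) / 2) := by
  refine ⟨fun x xl uperp hperp => ?_, fun hcl => stmt_5_pos_aux mu lu c lam2 hmu hc hlam2 hcl⟩
  have hsplit : Fbig x (Ppar x + uperp) - Fbig xl (Ppar xl)
      = (Fbig x (Ppar x + uperp) - Fbig x (Ppar x)) + (F x - F xl) := by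
    rw [hconsensus x, hconsensus xl]; abel
  have hLipx : ‖Fbig x (Ppar x + uperp) - Fbig x (Ppar x)‖ ≤ lu * ‖uperp‖ := by
    have h := hLip x (Ppar x + uperp) (Ppar x)
    simpa [add_sub_cancel_left] using h
  have h1 : -(lu * ‖x - xl‖ * ‖uperp‖)
      ≤ ⟪x - xl, Fbig x (Ppar x + uperp) - Fbig x (Ppar x)⟫ := by
    have habs := abs_real_inner_le_norm (x - xl)
      (Fbig x (Ppar x + uperp) - Fbig x (Ppar x))
    have hlb := neg_abs_le ⟪x - xl, Fbig x (Ppar x + uperp) - Fbig x (Ppar x)⟫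
    have hmul : ‖x - xl‖ * ‖Fbig x (Ppar x + uperp) - Fbig x (Ppar x)‖
        ≤ ‖x - xl‖ * (lu * ‖uperp‖) :=
      mul_le_mul_of_nonneg_left hLipx (norm_nonneg _)
    have : ⟪x - xl, Fbig x (Ppar x + uperp) - Fbig x (Ppar x)⟫
        ≥ -(‖x - xl‖ * (lu * ‖uperp‖)) := by linarith
    linarith [this]
  have h2 : mu * ‖x - xl‖ ^ 2 ≤ ⟪x - xl, F x - F xl⟫ := hmono x xl
  have h3 : c * (lam2 * ‖uperp‖ ^ 2) ≤ ⟪uperp, c • Lu uperp⟫ := by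
    rw [real_inner_smul_right]
    exact mul_le_mul_of_nonneg_left (hLap uperp hperp) hc.le
  have hinner : ⟪x - xl, Fbig x (Ppar x + uperp) - Fbig xl (Ppar xl)⟫
      = ⟪x - xl, Fbig x (Ppar x + uperp) - Fbig x (Ppar x)⟫ + ⟪x - xl, F x - F xl⟫ := by
    rw [hsplit, inner_add_right]
  have hkey := stmt_5_quad_aux mu lu c lam2 ‖x - xl‖ ‖uperp‖ hlu
    (norm_nonneg _) (norm_nonneg _)
  rw [hinner]
  have hc3 : c * lam2 * ‖uperp‖ ^ 2 = c * (lam2 * ‖uperp‖ ^ 2) := by ring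
  linarith [hkey, h1, h2, h3, hc3.le]
end

section
/- Suppose an operator A : H → H on a real inner product space satisfies the two conditions with respect to a reference point ϖ̲: ⟨ϖ − ϖ̲, Aϖ − Aϖ̲⟩ ≥ µ_Ã (‖x − x̲‖² + ‖u^⊥‖²) + (1/λ_N)‖L_λ(λ − λ̲)‖² and ‖Ã(x,u^⊥) − Ã(x̲,0)‖² ≤ θ²(‖x − x̲‖² + ‖u^⊥‖²), where Aϖ stacks Ã and L_λ λ + b̄ components. Then A is β-restricted cocoercive with β = min{µ_Ã/θ², 1/λ_N}: ⟨ϖ − ϖ̲, Aϖ − Aϖ̲⟩ ≥ β‖Aϖ − Aϖ̲‖². -/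
open RealInnerProductSpace

/-- Abstract combination step of Lemma 5(ii): on
`H = ℝ^{Nn} × ℝ^{Nn} × ℝ^{Nm} × ℝ^{Nm}` with `ϖ = (x, u^⊥, z, λ)` and
`A(ϖ) = (Ã(x,u^⊥), 0, L_λ λ + b̄)`, if
`⟨ϖ−ϖ̲, Aϖ−Aϖ̲⟩ ≥ µ_Ã(‖x−x̲‖² + ‖u^⊥‖²) + (1/λ_N)‖L_λ(λ−λ̲)‖²` and
`‖Ã(x,u^⊥) − Ã(x̲,0)‖² ≤ θ²(‖x−x̲‖² + ‖u^⊥‖²)` (with `u̲^⊥ = 0`), then `A` is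
`β`-restricted cocoercive with `β = min{µ_Ã/θ², 1/λ_N}`. -/
theorem stmt_8 {V W : Type*} [NormedAddCommGroup V] [InnerProductSpace ℝ V]
    [NormedAddCommGroup W] [InnerProductSpace ℝ W]
    (Atil : V → V → V × V) (g : W → W) (bb : W)
    (muA θ lamN : ℝ) (hmuA : 0 < muA) (hθ : 0 < θ) (hlamN : 0 < lamN)
    (hlb : ∀ (x xl u : V) (z zl : W) (lam laml : W),
      muA * (‖x - xl‖ ^ 2 + ‖u - 0‖ ^ 2) + (1 / lamN) * ‖g lam - g laml‖ ^ 2 ≤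
        ⟪x - xl, (Atil x u).1 - (Atil xl 0).1⟫ +
          ⟪u - 0, (Atil x u).2 - (Atil xl 0).2⟫ +
          ⟪z - zl, (0 : W)⟫ +
          ⟪lam - laml, (g lam + bb) - (g laml + bb)⟫)
    (hub : ∀ (x xl u : V),
      ‖(Atil x u).1 - (Atil xl 0).1‖ ^ 2 + ‖(Atil x u).2 - (Atil xl 0).2‖ ^ 2 ≤
        θ ^ 2 * (‖x - xl‖ ^ 2 + ‖u - 0‖ ^ 2)) :
    ∀ (x xl u : V) (z zl : W) (lam laml : W),
      min (muA / θ ^ 2) (1 / lamN) *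
          (‖(Atil x u).1 - (Atil xl 0).1‖ ^ 2 +
            ‖(Atil x u).2 - (Atil xl 0).2‖ ^ 2 +
            ‖(g lam + bb) - (g laml + bb)‖ ^ 2) ≤
        ⟪x - xl, (Atil x u).1 - (Atil xl 0).1⟫ +
          ⟪u - 0, (Atil x u).2 - (Atil xl 0).2⟫ +
          ⟪z - zl, (0 : W)⟫ +
          ⟪lam - laml, (g lam + bb) - (g laml + bb)⟫ := by
  intro x xl u z zl lam laml
  have hub' := hub x xl u
  have hlb' := hlb x xl u z zl lam laml
  refine le_trans ?_ hlb'
  have hg : g lam + bb - (g laml + bb) = g lam - g laml := by abel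
  rw [hg]
  set S := ‖(Atil x u).1 - (Atil xl 0).1‖ ^ 2 + ‖(Atil x u).2 - (Atil xl 0).2‖ ^ 2 with hS
  set T := ‖g lam - g laml‖ ^ 2 with hT
  have hSnn : 0 ≤ S := by positivity
  have hTnn : 0 ≤ T := by positivity
  have h1 : min (muA / θ ^ 2) (1 / lamN) * (S + T) ≤ (muA / θ ^ 2) * S + (1 / lamN) * T := by
    rw [mul_add]
    gcongr
    · exact min_le_left _ _
    · exact min_le_right _ _
  have h2 : (muA / θ ^ 2) * S ≤ muA * (‖x - xl‖ ^ 2 + ‖u - 0‖ ^ 2) := by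
    have := mul_le_mul_of_nonneg_left hub' (le_of_lt (div_pos hmuA (by positivity) : (0:ℝ) < muA / θ ^ 2))
    calc (muA / θ ^ 2) * S ≤ (muA / θ ^ 2) * (θ ^ 2 * (‖x - xl‖ ^ 2 + ‖u - 0‖ ^ 2)) := this
      _ = muA * (‖x - xl‖ ^ 2 + ‖u - 0‖ ^ 2) := by field_simp
  linarith
end

section
/- Let Φ be symmetric with Φ ⪰ δI for δ > 0 and A : ℝ^d → ℝ^d be β-restricted cocoercive (relative to a reference point ϖ̲): ⟨ϖ − ϖ̲, Aϖ − Aϖ̲⟩ ≥ β‖Aϖ − Aϖ̲‖². Then T₁ = Id − Φ^{-1}A satisfies, in the Φ-induced norm, ‖T₁ϖ − T₁ϖ̲‖_Φ² ≤ ‖ϖ − ϖ̲‖_Φ² − (2βδ − 1)‖(ϖ − ϖ̲) − (T₁ϖ − T₁ϖ̲)‖_Φ². In particular, if βδ > 1/2, T₁ is restricted nonexpansive in ‖·‖_Φ. -/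
open Matrix

/-!
Write `u = ϖ - ϖ̲`, `w = Aϖ - Aϖ̲` and `z = Φ⁻¹w`, so that `T₁ϖ - T₁ϖ̲ = u - z` and `Φz = w`.
By symmetry of `Φ`, `‖u - z‖_Φ² = ‖u‖_Φ² - 2⟨u, w⟩ + ⟨z, w⟩` and `‖z‖_Φ² = ⟨z, w⟩`, so the claim
is `βδ⟨z, w⟩ ≤ ⟨u, w⟩`. Coercivity `Φ ⪰ δI` gives `δ⟨z, w⟩ ≤ ‖w‖²`, and cocoercivity gives
`β‖w‖² ≤ ⟨u, w⟩`.
-/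

namespace Matrix

section CommRing

variable {n R : Type*} [Fintype n] [CommRing R]

theorem IsSymm.sub_dotProduct_mulVec_sub {Φ : Matrix n n R} (hΦ : Φ.IsSymm) (u z : n → R) :
    (u - z) ⬝ᵥ (Φ *ᵥ (u - z)) =
      u ⬝ᵥ (Φ *ᵥ u) - 2 * (u ⬝ᵥ (Φ *ᵥ z)) + z ⬝ᵥ (Φ *ᵥ z) := by
  have hzu : z ⬝ᵥ (Φ *ᵥ u) = u ⬝ᵥ (Φ *ᵥ z) := by
    rw [← dotProduct_transpose_mulVec, hΦ.eq]
  simp only [mulVec_sub, dotProduct_sub, sub_dotProduct, hzu]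
  ring

end CommRing

section OrderedField

variable {n R : Type*} [Fintype n] [Field R] [LinearOrder R] [IsStrictOrderedRing R]
  {Φ : Matrix n n R} {δ : R}

theorem isUnit_of_coercive [DecidableEq n] (hδ : 0 < δ)
    (hΦδ : ∀ v, δ * (v ⬝ᵥ v) ≤ v ⬝ᵥ (Φ *ᵥ v)) : IsUnit Φ := by
  refine mulVec_injective_iff_isUnit.mp fun v w hvw => sub_eq_zero.mp ?_
  have hker := hΦδ (v - w)
  rw [mulVec_sub, hvw, sub_self, dotProduct_zero] at hker
  exact dotProduct_self_eq_zero.mp <| le_antisymm (nonpos_of_mul_nonpos_right hker hδ)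
    (Finset.sum_nonneg fun i _ => mul_self_nonneg _)

/-- In the dual norm: `‖w‖²_{Φ⁻¹} ≤ ‖w‖² / δ` for `w = Φz`. -/
theorem coercive_mul_dotProduct_mulVec_le (hδ : 0 ≤ δ)
    (hΦδ : ∀ v, δ * (v ⬝ᵥ v) ≤ v ⬝ᵥ (Φ *ᵥ v)) (z : n → R) :
    δ * (z ⬝ᵥ (Φ *ᵥ z)) ≤ (Φ *ᵥ z) ⬝ᵥ (Φ *ᵥ z) := by
  set w := Φ *ᵥ z
  have hsq : 0 ≤ (w - δ • z) ⬝ᵥ (w - δ • z) := Finset.sum_nonneg fun i _ => mul_self_nonneg _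
  simp only [dotProduct_sub, sub_dotProduct, dotProduct_smul, smul_dotProduct, smul_eq_mul,
    dotProduct_comm w z] at hsq
  nlinarith [mul_le_mul_of_nonneg_left (hΦδ z) hδ]

theorem IsSymm.sub_dotProduct_mulVec_sub_le (hΦ : Φ.IsSymm) (hδ : 0 ≤ δ)
    (hΦδ : ∀ v, δ * (v ⬝ᵥ v) ≤ v ⬝ᵥ (Φ *ᵥ v)) {β : R} (hβ : 0 ≤ β) (u z : n → R)
    (hcoco : β * ((Φ *ᵥ z) ⬝ᵥ (Φ *ᵥ z)) ≤ u ⬝ᵥ (Φ *ᵥ z)) :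
    (u - z) ⬝ᵥ (Φ *ᵥ (u - z)) ≤ u ⬝ᵥ (Φ *ᵥ u) - (2 * β * δ - 1) * (z ⬝ᵥ (Φ *ᵥ z)) := by
  rw [hΦ.sub_dotProduct_mulVec_sub]
  nlinarith [mul_le_mul_of_nonneg_left (coercive_mul_dotProduct_mulVec_le hδ hΦδ z) hβ]

theorem IsSymm.forward_step_dotProduct_mulVec_le [DecidableEq n] (hΦ : Φ.IsSymm) (hδ : 0 < δ)
    (hΦδ : ∀ v, δ * (v ⬝ᵥ v) ≤ v ⬝ᵥ (Φ *ᵥ v)) {β : R} (hβ : 0 ≤ β) (x y a b : n → R)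
    (hcoco : β * ((a - b) ⬝ᵥ (a - b)) ≤ (x - y) ⬝ᵥ (a - b)) :
    ((x - Φ⁻¹ *ᵥ a) - (y - Φ⁻¹ *ᵥ b)) ⬝ᵥ (Φ *ᵥ ((x - Φ⁻¹ *ᵥ a) - (y - Φ⁻¹ *ᵥ b))) ≤
      (x - y) ⬝ᵥ (Φ *ᵥ (x - y)) -
        (2 * β * δ - 1) * (((x - y) - ((x - Φ⁻¹ *ᵥ a) - (y - Φ⁻¹ *ᵥ b))) ⬝ᵥ
          (Φ *ᵥ ((x - y) - ((x - Φ⁻¹ *ᵥ a) - (y - Φ⁻¹ *ᵥ b))))) := by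
  have hdet : IsUnit Φ.det := (isUnit_iff_isUnit_det Φ).mp (isUnit_of_coercive hδ hΦδ)
  have hz : Φ *ᵥ (Φ⁻¹ *ᵥ (a - b)) = a - b := by
    rw [mulVec_mulVec, mul_nonsing_inv _ hdet, one_mulVec]
  have hstep : (x - Φ⁻¹ *ᵥ a) - (y - Φ⁻¹ *ᵥ b) = (x - y) - Φ⁻¹ *ᵥ (a - b) := by
    rw [mulVec_sub]; abel
  rw [hstep, sub_sub_cancel]
  exact hΦ.sub_dotProduct_mulVec_sub_le hδ.le hΦδ hβ _ _ (by rwa [hz])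

end OrderedField

end Matrix

/-- Lemma 7(ii) abstractly: if `Φ` is symmetric with `Φ ⪰ δI`, `δ > 0`, and
`A` is `β`-restricted cocoercive relative to `ϖ̲`, then `T₁ = Id − Φ⁻¹A`
satisfies, in the `Φ`-induced norm `‖v‖_Φ² = vᵀΦv`,
`‖T₁ϖ − T₁ϖ̲‖_Φ² ≤ ‖ϖ − ϖ̲‖_Φ² − (2βδ − 1)‖(ϖ−ϖ̲) − (T₁ϖ−T₁ϖ̲)‖_Φ²`;
in particular `T₁` is restricted nonexpansive in `‖·‖_Φ` when `βδ > 1/2`. -/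
theorem stmt_11 {d : ℕ} (Φ : Matrix (Fin d) (Fin d) ℝ)
    (hΦsymm : Φ.IsSymm) (δ : ℝ) (hδ : 0 < δ)
    (hΦδ : ∀ v : Fin d → ℝ, δ * (v ⬝ᵥ v) ≤ v ⬝ᵥ (Φ *ᵥ v))
    (A : (Fin d → ℝ) → (Fin d → ℝ)) (β : ℝ) (hβ : 0 < β)
    (ϖl : Fin d → ℝ)
    (hcoco : ∀ ϖ : Fin d → ℝ,
      β * ((A ϖ - A ϖl) ⬝ᵥ (A ϖ - A ϖl)) ≤ (ϖ - ϖl) ⬝ᵥ (A ϖ - A ϖl)) :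
    (∀ ϖ : Fin d → ℝ,
      ((ϖ - Φ⁻¹ *ᵥ A ϖ) - (ϖl - Φ⁻¹ *ᵥ A ϖl)) ⬝ᵥ
          (Φ *ᵥ ((ϖ - Φ⁻¹ *ᵥ A ϖ) - (ϖl - Φ⁻¹ *ᵥ A ϖl))) ≤
        (ϖ - ϖl) ⬝ᵥ (Φ *ᵥ (ϖ - ϖl)) -
          (2 * β * δ - 1) *
            (((ϖ - ϖl) - ((ϖ - Φ⁻¹ *ᵥ A ϖ) - (ϖl - Φ⁻¹ *ᵥ A ϖl))) ⬝ᵥ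
              (Φ *ᵥ ((ϖ - ϖl) - ((ϖ - Φ⁻¹ *ᵥ A ϖ) - (ϖl - Φ⁻¹ *ᵥ A ϖl)))))) ∧
    (β * δ > 1 / 2 → ∀ ϖ : Fin d → ℝ,
      ((ϖ - Φ⁻¹ *ᵥ A ϖ) - (ϖl - Φ⁻¹ *ᵥ A ϖl)) ⬝ᵥ
          (Φ *ᵥ ((ϖ - Φ⁻¹ *ᵥ A ϖ) - (ϖl - Φ⁻¹ *ᵥ A ϖl))) ≤
        (ϖ - ϖl) ⬝ᵥ (Φ *ᵥ (ϖ - ϖl))) := by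
  have hstep := fun ϖ =>
    hΦsymm.forward_step_dotProduct_mulVec_le hδ hΦδ hβ.le ϖ ϖl (A ϖ) (A ϖl) (hcoco ϖ)
  have hΦnonneg : ∀ v, 0 ≤ v ⬝ᵥ (Φ *ᵥ v) := fun v =>
    (mul_nonneg hδ.le (Finset.sum_nonneg fun i _ => mul_self_nonneg (v i))).trans (hΦδ v)
  refine ⟨hstep, fun hβδ ϖ => (hstep ϖ).trans (sub_le_self _ ?_)⟩
  exact mul_nonneg (by linarith) (hΦnonneg _)
end

section
/- Let δ > 0 and 0 < κ < 1/δ, and let P be an orthogonal projection matrix (P = P^T = P²). Then the block matrix M = [[ (1/(κ(1−κδ))) I + κ^{-1} P , −κ^{-1} P ], [ −κ^{-1} P , (κ^{-1} − δ) I ]] is positive semi-definite. -/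
/-!
Taking the Schur complement of the positive definite block `(κ⁻¹ - δ) • 1`, and using `P * P = P`
together with `(κ⁻¹)² = (κ⁻¹ - δ) / (κ (1 - κ δ))`, the complement collapses to
`(1 / (κ (1 - κ δ))) • (1 - P) + κ⁻¹ • P`, a nonnegative combination of the complementary
projections `1 - P` and `P`.
-/

open Matrix

open scoped MatrixOrder ComplexOrder

namespace Matrix

variable {n : Type*} [Fintype n]

theorem posSemidef_of_isStarProjection {𝕜 : Type*} [RCLike 𝕜] {P : Matrix n n 𝕜}
    (hP : IsStarProjection P) : P.PosSemidef :=
  nonneg_iff_posSemidef.mp hP.nonneg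

theorem posSemidef_fromBlocks_of_isStarProjection [DecidableEq n] {P : Matrix n n ℝ}
    (hP : IsStarProjection P) {b c e : ℝ} (hb : 0 ≤ b) (he : 0 < e) (hbce : b * b = c * e) :
    (fromBlocks (c • 1 + b • P) (-(b • P)) (-(b • P)) (e • 1)).PosSemidef := by
  have hc : 0 ≤ c := (mul_nonneg_iff_of_pos_right he).mp (hbce ▸ mul_self_nonneg b)
  have hD : (e • 1 : Matrix n n ℝ).PosDef := PosDef.one.smul he
  have hD_inv : (e • 1 : Matrix n n ℝ)⁻¹ = e⁻¹ • 1 :=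
    inv_eq_left_inv (by rw [smul_mul_smul_comm, inv_mul_cancel₀ he.ne', one_mul, one_smul])
  have hB : (-(b • P))ᴴ = -(b • P) := by
    rw [conjTranspose_neg, conjTranspose_smul, show Pᴴ = P from hP.isSelfAdjoint, star_trivial]
  have hschur : c • 1 + b • P - -(b • P) * (e • 1 : Matrix n n ℝ)⁻¹ * -(b • P)
      = c • (1 - P) + b • P := by
    obtain rfl : c = b * b * e⁻¹ := by field_simp; linarith
    rw [hD_inv]
    simp only [Matrix.neg_mul, Matrix.mul_neg, Matrix.smul_mul, Matrix.mul_smul, Matrix.mul_one,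
      smul_smul, hP.isIdempotentElem.eq]
    module
  let := hD.isUnit.invertible
  have hschur_iff := PosDef.fromBlocks₂₂ (c • 1 + b • P) (-(b • P)) hD
  rw [hB, hschur] at hschur_iff
  exact hschur_iff.mpr <| ((posSemidef_of_isStarProjection hP.one_sub).smul hc).add
    ((posSemidef_of_isStarProjection hP).smul hb)

end Matrix

/-- The block matrix `Φ₁` in the proof of Lemma 6: for `δ > 0`, `0 < κ < 1/δ`
and an orthogonal projection matrix `P` (`P = Pᵀ = P²`), the block matrix
`[[ (1/(κ(1−κδ)))I + κ⁻¹P , −κ⁻¹P ], [ −κ⁻¹P , (κ⁻¹ − δ)I ]]`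
is positive semi-definite. -/
theorem stmt_12 {d : ℕ} (δ κ : ℝ) (hδ : 0 < δ) (hκ : 0 < κ) (hκδ : κ < 1 / δ)
    (P : Matrix (Fin d) (Fin d) ℝ) (hPsymm : P.IsSymm) (hPidem : P * P = P) :
    (Matrix.fromBlocks
      ((1 / (κ * (1 - κ * δ))) • (1 : Matrix (Fin d) (Fin d) ℝ) + κ⁻¹ • P)
      (-(κ⁻¹ • P))
      (-(κ⁻¹ • P))
      ((κ⁻¹ - δ) • (1 : Matrix (Fin d) (Fin d) ℝ))).PosSemidef := by
  have hP : IsStarProjection P := ⟨hPidem, isHermitian_iff_isSymm.mpr hPsymm⟩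
  refine posSemidef_fromBlocks_of_isStarProjection hP (by positivity) ?_ ?_
  · rw [sub_pos, lt_inv_comm₀ hδ hκ, ← one_div]
    exact hκδ
  · have : 1 - κ * δ ≠ 0 := by linarith [(lt_div_iff₀ hδ).mp hκδ]
    field_simp
end
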